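/- Let q be a positive power of an odd prime p, let k ≥ 1 be an integer, and let M_a, M_b, M_c be arbitrary k×k matrices over 𝔽_q. Then: (1) the assignments a ↦ V_a, b ↦ V_b, c ↦ V_c extend to a group homomorphism 𝒢_{C̃₂}(p) → SL_{4k}(𝔽_q); and (2) the assignments a ↦ V'_a, b ↦ V'_b, c ↦ V'_c extend to a group homomorphism 𝒢_{HB₂⁽²⁾}(p) → SL_{4k}(𝔽_q). -/

import Mathlib

/-- The commutator [x,y] = x⁻¹y⁻¹xy (the convention used in the paper). -/
def pc {G : Type*} [Group G] (x y : G) : G := x⁻¹ * y⁻¹ * x * y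

/-- The relators of the Kac–Moody–Steinberg group 𝒢_{C̃₂}(p):
a^p, b^p, c^p, [a,b], [b,c,b], [b,c,c,b], [b,c,c,c], [a,c,a], [a,c,c,a], [a,c,c,c]. -/
def kmsC2Rels (p : ℕ) : Set (FreeGroup (Fin 3)) :=
  let a : FreeGroup (Fin 3) := FreeGroup.of 0
  let b : FreeGroup (Fin 3) := FreeGroup.of 1
  let c : FreeGroup (Fin 3) := FreeGroup.of 2
  {a ^ p, b ^ p, c ^ p, pc a b,
   pc (pc b c) b, pc (pc (pc b c) c) b, pc (pc (pc b c) c) c,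
   pc (pc a c) a, pc (pc (pc a c) c) a, pc (pc (pc a c) c) c}

/-- The relators of the Kac–Moody–Steinberg group 𝒢_{HB₂⁽²⁾}(p):
a^p, b^p, c^p, [a,b,a], [a,b,b], [c,b,c], [c,b,b,c], [c,b,b,b], [c,a,c], [c,a,a,c],
[c,a,a,a]. -/
def kmsHB22Rels (p : ℕ) : Set (FreeGroup (Fin 3)) :=
  let a : FreeGroup (Fin 3) := FreeGroup.of 0
  let b : FreeGroup (Fin 3) := FreeGroup.of 1
  let c : FreeGroup (Fin 3) := FreeGroup.of 2
  {a ^ p, b ^ p, c ^ p,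
   pc (pc a b) a, pc (pc a b) b,
   pc (pc c b) c, pc (pc (pc c b) b) c, pc (pc (pc c b) b) b,
   pc (pc c a) c, pc (pc (pc c a) a) c, pc (pc (pc c a) a) a}

/-- An n×n block matrix with k×k blocks: identity blocks on the diagonal, and
off-diagonal (i,j)-block `off i j`. -/
def blockOne {n k : ℕ} {F : Type*} [CommRing F]
    (off : Fin n → Fin n → Matrix (Fin k) (Fin k) F) :
    Matrix (Fin n × Fin k) (Fin n × Fin k) F :=
  fun x y =>
    if x.1 = y.1 then (1 : Matrix (Fin k) (Fin k) F) x.2 y.2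
    else off x.1 y.1 x.2 y.2

/-- The 4k×4k matrix V_a: identity diagonal blocks, block (3,1) equal to M_a. -/
def Va {k : ℕ} {F : Type*} [CommRing F] (Ma : Matrix (Fin k) (Fin k) F) :
    Matrix (Fin 4 × Fin k) (Fin 4 × Fin k) F :=
  blockOne (fun i j => if i = 2 ∧ j = 0 then Ma else 0)

/-- The 4k×4k matrix V_b: identity diagonal blocks, block (4,2) equal to M_b. -/
def Vb {k : ℕ} {F : Type*} [CommRing F] (Mb : Matrix (Fin k) (Fin k) F) :
    Matrix (Fin 4 × Fin k) (Fin 4 × Fin k) F :=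
  blockOne (fun i j => if i = 3 ∧ j = 1 then Mb else 0)

/-- The 4k×4k matrix V_c: identity diagonal blocks, blocks (1,4) and (2,3) equal
to M_c. -/
def Vc {k : ℕ} {F : Type*} [CommRing F] (Mc : Matrix (Fin k) (Fin k) F) :
    Matrix (Fin 4 × Fin k) (Fin 4 × Fin k) F :=
  blockOne (fun i j => if (i = 0 ∧ j = 3) ∨ (i = 1 ∧ j = 2) then Mc else 0)

/-- The 4k×4k matrix V'_a: identity diagonal blocks, blocks (1,4) and (2,3) equal
to M_a. -/
def Va' {k : ℕ} {F : Type*} [CommRing F] (Ma : Matrix (Fin k) (Fin k) F) :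
    Matrix (Fin 4 × Fin k) (Fin 4 × Fin k) F :=
  blockOne (fun i j => if (i = 0 ∧ j = 3) ∨ (i = 1 ∧ j = 2) then Ma else 0)

/-- The 4k×4k matrix V'_b: identity diagonal blocks, block (2,1) equal to M_b and block
(3,4) equal to −M_b. -/
def Vb' {k : ℕ} {F : Type*} [CommRing F] (Mb : Matrix (Fin k) (Fin k) F) :
    Matrix (Fin 4 × Fin k) (Fin 4 × Fin k) F :=
  blockOne (fun i j =>
    if i = 1 ∧ j = 0 then Mb else if i = 2 ∧ j = 3 then -Mb else 0)

/-- The 4k×4k matrix V'_c: identity diagonal blocks, block (4,2) equal to M_c. -/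
def Vc' {k : ℕ} {F : Type*} [CommRing F] (Mc : Matrix (Fin k) (Fin k) F) :
    Matrix (Fin 4 × Fin k) (Fin 4 × Fin k) F :=
  blockOne (fun i j => if i = 3 ∧ j = 1 then Mc else 0)

/-!
Each generator is sent to `1 + N` with `N² = 0` in the ring of 4×4 block matrices, so it is a
unit with inverse `1 - N` whose `p`-th power is `1 + pN = 1`; since Frobenius is injective on
`𝔽_q`, its determinant is then `1` as well. For the commutator relators we compute the
intermediate commutators `[x,y]` and `[x,y,y]`: each is again of the form `1 + K` with `K² = 0`,
and `[1 + K, 1 + N] = 1` as soon as `KN = NK`, which here holds because both products of block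
matrix units vanish.
-/

section Commutator

variable {G : Type*} [Group G]

theorem pc_eq_one_iff {x y : G} : pc x y = 1 ↔ Commute x y := by
  rw [pc, mul_assoc, ← mul_inv_rev, inv_mul_eq_one]
  exact eq_comm

theorem map_pc {H : Type*} [Group H] (f : G →* H) (x y : G) :
    f (pc x y) = pc (f x) (f y) := by
  simp [pc]

end Commutator

section Unipotent

variable {R : Type*} [Ring R] {N M K : R}

def unipotent (N : R) (hN : N * N = 0) : Rˣ where
  val := 1 + N
  inv := 1 - N
  val_inv := by rw [mul_sub, mul_one, add_mul, one_mul, hN, add_zero, add_sub_cancel_right]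
  inv_val := by rw [mul_add, mul_one, sub_mul, one_mul, hN, sub_zero, sub_add_cancel]

@[simp]
theorem val_unipotent (hN : N * N = 0) : (unipotent N hN : R) = 1 + N := rfl

@[simp]
theorem val_inv_unipotent (hN : N * N = 0) : (↑(unipotent N hN)⁻¹ : R) = 1 - N := rfl

theorem val_unipotent_pow (hN : N * N = 0) (n : ℕ) :
    (↑(unipotent N hN ^ n) : R) = 1 + n • N := by
  induction n with
  | zero => simp
  | succ n ih =>
    rw [pow_succ, Units.val_mul, ih, val_unipotent, add_mul, one_mul, mul_add, mul_one,
      smul_mul_assoc, hN, smul_zero, add_zero, succ_nsmul]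
    abel

theorem unipotent_pow_char {p : ℕ} (hp : (p : R) = 0) (hN : N * N = 0) :
    unipotent N hN ^ p = 1 := by
  ext
  rw [val_unipotent_pow, nsmul_eq_mul, hp, zero_mul, add_zero, Units.val_one]

theorem pc_unipotent_eq_one (hN : N * N = 0) (hM : M * M = 0) (h : N * M = M * N) :
    pc (unipotent N hN) (unipotent M hM) = 1 :=
  pc_eq_one_iff.2 <| Units.ext <| by
    simpa using ((Commute.one_right _).add_right ((Commute.one_left M).add_left h)).eq

theorem pc_unipotent (hN : N * N = 0) (hM : M * M = 0) (hK : K * K = 0)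
    (h : (1 - N) * (1 - M) * (1 + N) * (1 + M) = 1 + K) :
    pc (unipotent N hN) (unipotent M hM) = unipotent K hK :=
  Units.ext <| by simpa [pc] using h

end Unipotent

theorem Matrix.natCast_eq_zero {n α : Type*} [DecidableEq n] [AddMonoidWithOne α] {p : ℕ}
    (hp : (p : α) = 0) : (p : Matrix n n α) = 0 := by
  rw [← Matrix.diagonal_natCast, hp, Matrix.diagonal_zero]

theorem Matrix.det_eq_one_of_pow_eq_one {n F : Type*} [Fintype n] [DecidableEq n] [CommRing F]
    [IsReduced F] (p : ℕ) [ExpChar F p] {A : Matrix n n F} (h : A ^ p = 1) : A.det = 1 :=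
  frobenius_inj F p <| by
    rw [frobenius_def, frobenius_def, ← Matrix.det_pow, h, Matrix.det_one, one_pow]

theorem PresentedGroup.of_pow_eq_one {ι : Type*} {rels : Set (FreeGroup ι)} {p : ℕ} {i : ι}
    (h : FreeGroup.of i ^ p ∈ rels) : (PresentedGroup.of i : PresentedGroup rels) ^ p = 1 := by
  rw [PresentedGroup.of, ← map_pow, PresentedGroup.one_of_mem h]

theorem PresentedGroup.exists_lift_specialLinearGroup {ι n F : Type*} [Fintype n] [DecidableEq n]
    [CommRing F] [IsReduced F] {p : ℕ} [ExpChar F p] {rels : Set (FreeGroup ι)}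
    (hpow : ∀ i, FreeGroup.of i ^ p ∈ rels) (ψ : PresentedGroup rels →* GL n F) :
    ∃ ρ : PresentedGroup rels →* Matrix.SpecialLinearGroup n F,
      ∀ g, (ρ g : Matrix n n F) = ψ g := by
  have hdet : Matrix.GeneralLinearGroup.det.comp ψ = 1 := PresentedGroup.ext fun i => Units.ext <|
    Matrix.det_eq_one_of_pow_eq_one p <| by
      rw [← Units.val_pow_eq_pow_val, ← map_pow, of_pow_eq_one (hpow i), map_one, Units.val_one]
  refine ⟨{ toFun := fun g => ⟨ψ g, congr_arg Units.val (DFunLike.congr_fun hdet g)⟩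
            map_one' := Subtype.ext <| congr_arg Units.val (map_one ψ)
            map_mul' := fun g h => Subtype.ext <| congr_arg Units.val (map_mul ψ g h) },
    fun _ => rfl⟩

namespace kmsC2

open Matrix

variable {α : Type*} [Ring α] (A B C : α)

def genA : (Matrix (Fin 4) (Fin 4) α)ˣ := unipotent (single 2 0 A) (by simp)

def genB : (Matrix (Fin 4) (Fin 4) α)ˣ := unipotent (single 3 1 B) (by simp)

def genC : (Matrix (Fin 4) (Fin 4) α)ˣ :=
  unipotent (single 0 3 C + single 1 2 C) (by simp [mul_add, add_mul])

theorem pc_genB_genC : pc (genB B) (genC C) =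
    unipotent (single 3 2 (B * C) - single 0 1 (C * B) - single 0 2 (C * B * C))
      (by simp [mul_sub, sub_mul]) :=
  pc_unipotent _ _ _ (by simp [mul_add, add_mul, mul_sub, sub_mul, mul_assoc]; abel)

theorem pc_pc_genB_genC_genC : pc (pc (genB B) (genC C)) (genC C) =
    unipotent (-(single 0 2 (C * B * C) + single 0 2 (C * B * C)))
      (by simp [mul_add, add_mul]) := by
  rw [pc_genB_genC]
  exact pc_unipotent _ _ _ (by simp [mul_add, add_mul, mul_sub, sub_mul, mul_assoc]; abel)

theorem pc_genA_genC : pc (genA A) (genC C) =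
    unipotent (single 2 3 (A * C) - single 1 0 (C * A) - single 1 3 (C * A * C))
      (by simp [mul_sub, sub_mul]) :=
  pc_unipotent _ _ _ (by simp [mul_add, add_mul, mul_sub, sub_mul, mul_assoc]; abel)

theorem pc_pc_genA_genC_genC : pc (pc (genA A) (genC C)) (genC C) =
    unipotent (-(single 1 3 (C * A * C) + single 1 3 (C * A * C)))
      (by simp [mul_add, add_mul]) := by
  rw [pc_genA_genC]
  exact pc_unipotent _ _ _ (by simp [mul_add, add_mul, mul_sub, sub_mul, mul_assoc]; abel)

theorem lift_rels {p : ℕ} (hp : (p : Matrix (Fin 4) (Fin 4) α) = 0) :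
    ∀ r ∈ kmsC2Rels p, FreeGroup.lift ![genA A, genB B, genC C] r = 1 := by
  simp only [kmsC2Rels, Set.mem_insert_iff, Set.mem_singleton_iff]
  rintro r (rfl | rfl | rfl | rfl | rfl | rfl | rfl | rfl | rfl | rfl) <;>
    simp only [map_pow, map_pc, FreeGroup.lift_apply_of, cons_val_zero, cons_val_one,
      cons_val_two, tail_cons, head_cons]
  iterate 3 exact unipotent_pow_char hp _
  · exact pc_unipotent_eq_one _ _ (by simp)
  · rw [pc_genB_genC]
    exact pc_unipotent_eq_one _ _ (by simp [mul_sub, sub_mul])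
  · rw [pc_pc_genB_genC_genC]
    exact pc_unipotent_eq_one _ _ (by simp [mul_add, add_mul])
  · rw [pc_pc_genB_genC_genC]
    exact pc_unipotent_eq_one _ _ (by simp [mul_add, add_mul])
  · rw [pc_genA_genC]
    exact pc_unipotent_eq_one _ _ (by simp [mul_sub, sub_mul])
  · rw [pc_pc_genA_genC_genC]
    exact pc_unipotent_eq_one _ _ (by simp [mul_add, add_mul])
  · rw [pc_pc_genA_genC_genC]
    exact pc_unipotent_eq_one _ _ (by simp [mul_add, add_mul])

end kmsC2

namespace kmsHB22

open Matrix

variable {α : Type*} [Ring α] (A B C : α)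

def genA : (Matrix (Fin 4) (Fin 4) α)ˣ :=
  unipotent (single 0 3 A + single 1 2 A) (by simp [mul_add, add_mul])

def genB : (Matrix (Fin 4) (Fin 4) α)ˣ :=
  unipotent (single 1 0 B - single 2 3 B) (by simp [mul_sub, sub_mul])

def genC : (Matrix (Fin 4) (Fin 4) α)ˣ := unipotent (single 3 1 C) (by simp)

theorem pc_genA_genB : pc (genA A) (genB B) =
    unipotent (-(single 1 3 (A * B) + single 1 3 (B * A))) (by simp [mul_add, add_mul]) :=
  pc_unipotent _ _ _ (by simp [mul_add, add_mul, mul_sub, sub_mul]; abel)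

theorem pc_genC_genB : pc (genC C) (genB B) =
    unipotent (single 3 0 (C * B) + single 2 1 (B * C) + single 2 0 (B * C * B))
      (by simp [mul_add, add_mul]) :=
  pc_unipotent _ _ _ (by simp [mul_add, add_mul, mul_sub, sub_mul, mul_assoc]; abel)

theorem pc_pc_genC_genB_genB : pc (pc (genC C) (genB B)) (genB B) =
    unipotent (single 2 0 (B * C * B) + single 2 0 (B * C * B))
      (by simp [mul_add, add_mul]) := by
  rw [pc_genC_genB]
  exact pc_unipotent _ _ _ (by simp [mul_add, add_mul, mul_sub, sub_mul, mul_assoc]; abel)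

theorem pc_genC_genA : pc (genC C) (genA A) =
    unipotent (single 3 2 (C * A) - single 0 1 (A * C) - single 0 2 (A * C * A))
      (by simp [mul_sub, sub_mul]) :=
  pc_unipotent _ _ _ (by simp [mul_add, add_mul, mul_sub, sub_mul, mul_assoc]; abel)

theorem pc_pc_genC_genA_genA : pc (pc (genC C) (genA A)) (genA A) =
    unipotent (-(single 0 2 (A * C * A) + single 0 2 (A * C * A)))
      (by simp [mul_add, add_mul]) := by
  rw [pc_genC_genA]
  exact pc_unipotent _ _ _ (by simp [mul_add, add_mul, mul_sub, sub_mul, mul_assoc]; abel)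

theorem lift_rels {p : ℕ} (hp : (p : Matrix (Fin 4) (Fin 4) α) = 0) :
    ∀ r ∈ kmsHB22Rels p, FreeGroup.lift ![genA A, genB B, genC C] r = 1 := by
  simp only [kmsHB22Rels, Set.mem_insert_iff, Set.mem_singleton_iff]
  rintro r (rfl | rfl | rfl | rfl | rfl | rfl | rfl | rfl | rfl | rfl | rfl) <;>
    simp only [map_pow, map_pc, FreeGroup.lift_apply_of, cons_val_zero, cons_val_one,
      cons_val_two, tail_cons, head_cons]
  iterate 3 exact unipotent_pow_char hp _
  · rw [pc_genA_genB]
    exact pc_unipotent_eq_one _ _ (by simp [mul_add, add_mul])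
  · rw [pc_genA_genB]
    exact pc_unipotent_eq_one _ _ (by simp [mul_add, add_mul, mul_sub, sub_mul])
  · rw [pc_genC_genB]
    exact pc_unipotent_eq_one _ _ (by simp [mul_add, add_mul])
  · rw [pc_pc_genC_genB_genB]
    exact pc_unipotent_eq_one _ _ (by simp [mul_add, add_mul])
  · rw [pc_pc_genC_genB_genB]
    exact pc_unipotent_eq_one _ _ (by simp [mul_add, add_mul, mul_sub, sub_mul])
  · rw [pc_genC_genA]
    exact pc_unipotent_eq_one _ _ (by simp [mul_sub, sub_mul])
  · rw [pc_pc_genC_genA_genA]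
    exact pc_unipotent_eq_one _ _ (by simp [mul_add, add_mul])
  · rw [pc_pc_genC_genA_genA]
    exact pc_unipotent_eq_one _ _ (by simp [mul_add, add_mul])

end kmsHB22

section BlockForm

open Matrix

variable {k : ℕ} {F : Type*} [CommRing F]

theorem blockOne_eq_compRingEquiv {n : ℕ} {off : Fin n → Fin n → Matrix (Fin k) (Fin k) F}
    {N : Matrix (Fin n) (Fin n) (Matrix (Fin k) (Fin k) F)}
    (hN : ∀ i j, N i j = if i = j then 0 else off i j) :
    blockOne off = compRingEquiv (Fin n) (Fin k) F (1 + N) := by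
  ext ⟨i, x⟩ ⟨j, y⟩
  by_cases hij : i = j <;> simp [blockOne, hN, hij, one_apply]

variable (M : Matrix (Fin k) (Fin k) F)

theorem Va_eq_compRingEquiv : Va M = compRingEquiv (Fin 4) (Fin k) F (kmsC2.genA M) :=
  blockOne_eq_compRingEquiv fun i j => by fin_cases i <;> fin_cases j <;> simp

theorem Vb_eq_compRingEquiv : Vb M = compRingEquiv (Fin 4) (Fin k) F (kmsC2.genB M) :=
  blockOne_eq_compRingEquiv fun i j => by fin_cases i <;> fin_cases j <;> simp

theorem Vc_eq_compRingEquiv : Vc M = compRingEquiv (Fin 4) (Fin k) F (kmsC2.genC M) :=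
  blockOne_eq_compRingEquiv fun i j => by fin_cases i <;> fin_cases j <;> simp

theorem Va'_eq_compRingEquiv : Va' M = compRingEquiv (Fin 4) (Fin k) F (kmsHB22.genA M) :=
  blockOne_eq_compRingEquiv fun i j => by fin_cases i <;> fin_cases j <;> simp

theorem Vb'_eq_compRingEquiv : Vb' M = compRingEquiv (Fin 4) (Fin k) F (kmsHB22.genB M) :=
  blockOne_eq_compRingEquiv fun i j => by fin_cases i <;> fin_cases j <;> simp

theorem Vc'_eq_compRingEquiv : Vc' M = compRingEquiv (Fin 4) (Fin k) F (kmsHB22.genC M) :=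
  blockOne_eq_compRingEquiv fun i j => by fin_cases i <;> fin_cases j <;> simp

end BlockForm

theorem of_pow_mem_kmsC2Rels (p : ℕ) (i : Fin 3) : FreeGroup.of i ^ p ∈ kmsC2Rels p := by
  fin_cases i <;> simp [kmsC2Rels]

theorem of_pow_mem_kmsHB22Rels (p : ℕ) (i : Fin 3) : FreeGroup.of i ^ p ∈ kmsHB22Rels p := by
  fin_cases i <;> simp [kmsHB22Rels]

theorem kms_block_reps_4k_general (p e k : ℕ) [Fact p.Prime]
    (Ma Mb Mc : Matrix (Fin k) (Fin k) (GaloisField p e)) :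
    (∃ ρ : PresentedGroup (kmsC2Rels p) →*
        Matrix.SpecialLinearGroup (Fin 4 × Fin k) (GaloisField p e),
      (↑(ρ (PresentedGroup.of 0)) : Matrix (Fin 4 × Fin k) (Fin 4 × Fin k)
          (GaloisField p e)) = Va Ma ∧
      (↑(ρ (PresentedGroup.of 1)) : Matrix (Fin 4 × Fin k) (Fin 4 × Fin k)
          (GaloisField p e)) = Vb Mb ∧
      (↑(ρ (PresentedGroup.of 2)) : Matrix (Fin 4 × Fin k) (Fin 4 × Fin k)
          (GaloisField p e)) = Vc Mc) ∧
    (∃ ρ' : PresentedGroup (kmsHB22Rels p) →*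
        Matrix.SpecialLinearGroup (Fin 4 × Fin k) (GaloisField p e),
      (↑(ρ' (PresentedGroup.of 0)) : Matrix (Fin 4 × Fin k) (Fin 4 × Fin k)
          (GaloisField p e)) = Va' Ma ∧
      (↑(ρ' (PresentedGroup.of 1)) : Matrix (Fin 4 × Fin k) (Fin 4 × Fin k)
          (GaloisField p e)) = Vb' Mb ∧
      (↑(ρ' (PresentedGroup.of 2)) : Matrix (Fin 4 × Fin k) (Fin 4 × Fin k)
          (GaloisField p e)) = Vc' Mc) := by
  have hp : (p : Matrix (Fin 4) (Fin 4) (Matrix (Fin k) (Fin k) (GaloisField p e))) = 0 :=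
    Matrix.natCast_eq_zero <| Matrix.natCast_eq_zero <| CharP.cast_eq_zero _ p
  let toGL := Units.map (Matrix.compRingEquiv (Fin 4) (Fin k) (GaloisField p e)).toMonoidHom
  obtain ⟨ρ, hρ⟩ := PresentedGroup.exists_lift_specialLinearGroup (of_pow_mem_kmsC2Rels p)
    (toGL.comp (PresentedGroup.toGroup (kmsC2.lift_rels Ma Mb Mc hp)))
  obtain ⟨ρ', hρ'⟩ := PresentedGroup.exists_lift_specialLinearGroup (of_pow_mem_kmsHB22Rels p)
    (toGL.comp (PresentedGroup.toGroup (kmsHB22.lift_rels Ma Mb Mc hp)))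
  refine ⟨⟨ρ, ?_, ?_, ?_⟩, ⟨ρ', ?_, ?_, ?_⟩⟩ <;>
    simp [hρ, hρ', toGL, Va_eq_compRingEquiv, Vb_eq_compRingEquiv, Vc_eq_compRingEquiv,
      Va'_eq_compRingEquiv, Vb'_eq_compRingEquiv, Vc'_eq_compRingEquiv]

/-- Let q = p^e be a positive power of an odd prime p, k ≥ 1, and M_a, M_b, M_c arbitrary
k×k matrices over 𝔽_q.  Then (1) a ↦ V_a, b ↦ V_b, c ↦ V_c extend to a group homomorphism
𝒢_{C̃₂}(p) → SL_{4k}(𝔽_q), and (2) a ↦ V'_a, b ↦ V'_b, c ↦ V'_c extend to a group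
homomorphism 𝒢_{HB₂⁽²⁾}(p) → SL_{4k}(𝔽_q). -/
theorem kms_block_reps_4k (p e k : ℕ) [Fact p.Prime] (hodd : Odd p) (he : 1 ≤ e)
    (hk : 1 ≤ k)
    (Ma Mb Mc : Matrix (Fin k) (Fin k) (GaloisField p e)) :
    (∃ ρ : PresentedGroup (kmsC2Rels p) →*
        Matrix.SpecialLinearGroup (Fin 4 × Fin k) (GaloisField p e),
      (↑(ρ (PresentedGroup.of 0)) : Matrix (Fin 4 × Fin k) (Fin 4 × Fin k)
          (GaloisField p e)) = Va Ma ∧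
      (↑(ρ (PresentedGroup.of 1)) : Matrix (Fin 4 × Fin k) (Fin 4 × Fin k)
          (GaloisField p e)) = Vb Mb ∧
      (↑(ρ (PresentedGroup.of 2)) : Matrix (Fin 4 × Fin k) (Fin 4 × Fin k)
          (GaloisField p e)) = Vc Mc) ∧
    (∃ ρ' : PresentedGroup (kmsHB22Rels p) →*
        Matrix.SpecialLinearGroup (Fin 4 × Fin k) (GaloisField p e),
      (↑(ρ' (PresentedGroup.of 0)) : Matrix (Fin 4 × Fin k) (Fin 4 × Fin k)
          (GaloisField p e)) = Va' Ma ∧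
      (↑(ρ' (PresentedGroup.of 1)) : Matrix (Fin 4 × Fin k) (Fin 4 × Fin k)
          (GaloisField p e)) = Vb' Mb ∧
      (↑(ρ' (PresentedGroup.of 2)) : Matrix (Fin 4 × Fin k) (Fin 4 × Fin k)
          (GaloisField p e)) = Vc' Mc) :=
  kms_block_reps_4k_general p e k Ma Mb Mc
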